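/- Let Φ : B(H_A) → B(H_B) be a quantum channel between finite-dimensional Hilbert spaces of equal dimension d, and suppose Φ is reversible with respect to a family {ρ_i}_{i=1}^d of mutually orthogonal pure states. Then {Φ(ρ_i)}_{i=1}^d is a family of mutually orthogonal pure states and Φ(I_{H_A}) = I_{H_B}. -/

import Mathlib

open Matrix
open scoped ComplexOrder
noncomputable section

abbrev Mat (n : ℕ) := Matrix (Fin n) (Fin n) ℂ

/-- Complete positivity of a linear map between matrix algebras:
all ampliations `id_k ⊗ Φ` map positive semidefinite matrices to positive
semidefinite matrices. -/
def IsCP {m n : Type*} [Fintype m] [Fintype n]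
    (Φ : Matrix m m ℂ →ₗ[ℂ] Matrix n n ℂ) : Prop :=
  ∀ (k : ℕ) (M : Matrix (Fin k × m) (Fin k × m) ℂ), M.PosSemidef →
    (Matrix.of fun p q : Fin k × n =>
      Φ (Matrix.of fun a b => M (p.1, a) (q.1, b)) p.2 q.2).PosSemidef

/-- Quantum channel: completely positive and trace preserving. -/
def IsChannel {m n : Type*} [Fintype m] [Fintype n]
    (Φ : Matrix m m ℂ →ₗ[ℂ] Matrix n n ℂ) : Prop :=
  IsCP Φ ∧ ∀ ρ : Matrix m m ℂ, (Φ ρ).trace = ρ.trace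

/-- A quantum state: positive semidefinite matrix of unit trace. -/
def IsState {n : Type*} [Fintype n] (ρ : Matrix n n ℂ) : Prop :=
  ρ.PosSemidef ∧ ρ.trace = 1

/-- Functional-calculus logarithm of a Hermitian matrix (with log 0 = 0 on the kernel). -/
def matLog {n : ℕ} (A : Mat n) : Mat n :=
  if h : A.IsHermitian then
    (h.eigenvectorUnitary : Mat n) *
      Matrix.diagonal (fun i => (Real.log (h.eigenvalues i) : ℂ)) *
      (star (h.eigenvectorUnitary : Mat n))
  else 0

/-- Quantum relative entropy  H(ρ‖σ) = Tr ρ (log ρ − log σ). -/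
def relEntropy {n : ℕ} (ρ σ : Mat n) : ℝ :=
  ((ρ * (matLog ρ - matLog σ)).trace).re

/-- von Neumann entropy. -/
def vnEntropy {n : Type*} [Fintype n] [DecidableEq n] (ρ : Matrix n n ℂ) : ℝ :=
  if h : ρ.IsHermitian then -∑ i, (h.eigenvalues i) * Real.log (h.eigenvalues i) else 0

/-- Partial trace over the second factor. -/
def ptrSnd {m k : Type*} [Fintype k] (M : Matrix (m × k) (m × k) ℂ) : Matrix m m ℂ :=
  Matrix.of fun a a' => ∑ b, M (a, b) (a', b)

/-- Partial trace over the first factor. -/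
def ptrFst {m k : Type*} [Fintype m] (M : Matrix (m × k) (m × k) ℂ) : Matrix k k ℂ :=
  Matrix.of fun b b' => ∑ a, M (a, b) (a, b')

def IsPureState {n : ℕ} (ρ : Mat n) : Prop :=
  ρ.PosSemidef ∧ ρ.trace = 1 ∧ ρ * ρ = ρ

/-!
Let `Ψ*` be the dual of `Ψ` for the trace pairing `(R, X) ↦ Tr (R X)` and put `Mᵢ = Ψ* ρᵢ`.
Since `Ψ` is completely positive and trace preserving, the `Mᵢ` are positive and sum to
`Ψ* 1 = 1`, and reversibility gives `Tr (Mᵢ Φ ρⱼ) = Tr (ρᵢ ρⱼ) = 0` for `i ≠ j`. For positive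
matrices `Tr (A B) = 0` forces `A B = 0`, so `Φ ρᵢ Φ ρⱼ = ∑ₖ Φ ρᵢ Mₖ Φ ρⱼ = 0`: the outputs are
`d` nonzero positive matrices with mutually orthogonal ranges in dimension `d`. Unit eigenvectors
`uᵢ` of the `Φ ρᵢ` for nonzero eigenvalues therefore form an orthonormal basis, each `Φ ρᵢ` is a
multiple of `uᵢ uᵢᴴ`, the multiple is `1` by trace preservation, and `Φ 1 = ∑ᵢ uᵢ uᵢᴴ = 1`.
-/

namespace Matrix

variable {n : Type*} [Fintype n] [DecidableEq n]

section Sqrt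

open scoped MatrixOrder

lemma PosSemidef.trace_mul_eq_trace_conjTranspose_mul_self {A B : Matrix n n ℂ}
    (hA : A.PosSemidef) (hB : B.PosSemidef) :
    (A * B).trace =
      ((CFC.sqrt A * CFC.sqrt B)ᴴ * (CFC.sqrt A * CFC.sqrt B)).trace := by
  have hsA : (CFC.sqrt A)ᴴ = CFC.sqrt A := (CFC.sqrt_nonneg A).isSelfAdjoint
  have hsB : (CFC.sqrt B)ᴴ = CFC.sqrt B := (CFC.sqrt_nonneg B).isSelfAdjoint
  rw [conjTranspose_mul, hsA, hsB, mul_assoc, ← mul_assoc (CFC.sqrt A),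
    CFC.sqrt_mul_sqrt_self A hA.nonneg, trace_mul_comm (CFC.sqrt B), mul_assoc,
    CFC.sqrt_mul_sqrt_self B hB.nonneg]

lemma PosSemidef.trace_mul_nonneg {A B : Matrix n n ℂ} (hA : A.PosSemidef) (hB : B.PosSemidef) :
    0 ≤ (A * B).trace := by
  rw [hA.trace_mul_eq_trace_conjTranspose_mul_self hB]
  exact (posSemidef_conjTranspose_mul_self _).trace_nonneg

lemma PosSemidef.mul_eq_zero_of_trace_mul_eq_zero {A B : Matrix n n ℂ} (hA : A.PosSemidef)
    (hB : B.PosSemidef) (h : (A * B).trace = 0) : A * B = 0 := by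
  rw [hA.trace_mul_eq_trace_conjTranspose_mul_self hB,
    trace_conjTranspose_mul_self_eq_zero_iff] at h
  rw [← CFC.sqrt_mul_sqrt_self A hA.nonneg, ← CFC.sqrt_mul_sqrt_self B hB.nonneg, mul_assoc,
    ← mul_assoc (CFC.sqrt A) (CFC.sqrt B), h, zero_mul, mul_zero]

end Sqrt

lemma posSemidef_of_forall_dotProduct_mulVec_nonneg {A : Matrix n n ℂ}
    (h : ∀ x, 0 ≤ star x ⬝ᵥ (A *ᵥ x)) : A.PosSemidef := by
  rw [← isPositive_toEuclideanLin_iff, LinearMap.isPositive_iff_complex]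
  intro x
  have hreal : star (star x.ofLp ⬝ᵥ A *ᵥ x.ofLp) = star x.ofLp ⬝ᵥ A *ᵥ x.ofLp :=
    Complex.conj_eq_iff_im.mpr (Complex.nonneg_iff.mp (h x.ofLp)).2.symm
  simp only [EuclideanSpace.inner_eq_star_dotProduct, toLpLin_apply]
  rw [dotProduct_star, dotProduct_comm, hreal]
  exact ⟨Complex.conj_eq_iff_re.mp hreal, (Complex.nonneg_iff.mp (h x.ofLp)).1⟩

lemma pairwise_mul_eq_zero_of_trace_mul_eq_zero_of_sum_eq_one {ι : Type*} [Fintype ι]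
    {M σ : ι → Matrix n n ℂ}
    (hM : ∀ i, (M i).PosSemidef) (hσ : ∀ i, (σ i).PosSemidef) (hsum : ∑ i, M i = 1)
    (htr : Pairwise fun i j => (M i * σ j).trace = 0) : Pairwise fun i j => σ i * σ j = 0 := by
  have hMσ : Pairwise fun i j => M i * σ j = 0 := fun i j hij =>
    (hM i).mul_eq_zero_of_trace_mul_eq_zero (hσ j) (htr hij)
  have hσM : Pairwise fun i j => σ i * M j = 0 := fun i j hij => by
    simpa [(hσ i).1.eq, (hM j).1.eq] using congrArg conjTranspose (hMσ hij.symm)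
  intro i j hij
  calc σ i * σ j = ∑ k, σ i * M k * σ j := by
        rw [← Finset.sum_mul, ← Finset.mul_sum, hsum, mul_one]
    _ = 0 := Finset.sum_eq_zero fun k _ => by
      rcases eq_or_ne i k with rfl | hik
      · rw [mul_assoc, hMσ hij, mul_zero]
      · rw [hσM hik, zero_mul]

lemma IsHermitian.exists_unit_eigenvector {A : Matrix n n ℂ} (hA : A.IsHermitian) (h : A ≠ 0) :
    ∃ (u : n → ℂ) (t : ℝ), t ≠ 0 ∧ star u ⬝ᵥ u = 1 ∧ A *ᵥ u = t • u := by
  obtain ⟨i, hi⟩ := Function.ne_iff.mp (mt hA.eigenvalues_eq_zero_iff.mp h)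
  refine ⟨(hA.eigenvectorBasis i).ofLp, hA.eigenvalues i, hi, ?_, hA.mulVec_eigenvectorBasis i⟩
  rw [dotProduct_comm, ← EuclideanSpace.inner_eq_star_dotProduct, OrthonormalBasis.inner_eq_one]

lemma sum_vecMulVec_self_star_eq_one {u : n → n → ℂ}
    (hu : ∀ i j, star (u i) ⬝ᵥ u j = if i = j then 1 else 0) :
    ∑ i, vecMulVec (u i) (star (u i)) = 1 := by
  set W : Matrix n n ℂ := of fun a i => u i a
  have hW : Wᴴ * W = 1 := by
    ext i j
    simpa [W, mul_apply, dotProduct, one_apply] using hu i j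
  calc ∑ i, vecMulVec (u i) (star (u i)) = W * Wᴴ := by
        ext a b
        simp [W, sum_apply, vecMulVec_apply, mul_apply]
    _ = 1 := mul_eq_one_comm.mp hW

lemma exists_orthonormal_eq_vecMulVec_of_pairwise_mul_eq_zero {σ : n → Matrix n n ℂ}
    (hσ : ∀ i, (σ i).PosSemidef) (htr : ∀ i, (σ i).trace = 1)
    (horth : Pairwise fun i j => σ i * σ j = 0) :
    ∃ u : n → n → ℂ, (∀ i j, star (u i) ⬝ᵥ u j = if i = j then 1 else 0) ∧
      ∀ i, σ i = vecMulVec (u i) (star (u i)) := by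
  have hne : ∀ i, σ i ≠ 0 := fun i h => by simpa [h] using htr i
  choose u t ht hunit heig using fun i => (hσ i).1.exists_unit_eigenvector (hne i)
  have hoff : Pairwise fun i j => σ i *ᵥ u j = 0 := fun i j hij => by
    have : t j • σ i *ᵥ u j = 0 := by
      rw [← mulVec_smul, ← heig, mulVec_mulVec, horth hij, zero_mulVec]
    exact (smul_eq_zero.mp this).resolve_left (ht j)
  have hu : ∀ i j, star (u i) ⬝ᵥ u j = if i = j then 1 else 0 := fun i j => by
    rcases eq_or_ne i j with rfl | hij
    · simpa using hunit i
    · have : t j • (star (u i) ⬝ᵥ u j) = 0 := by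
        rw [← dotProduct_smul, ← heig, dotProduct_mulVec, ← (hσ j).1.eq, ← star_mulVec,
          hoff hij.symm, star_zero, zero_dotProduct]
      simpa [hij] using (smul_eq_zero.mp this).resolve_left (ht j)
  have hσu : ∀ i, σ i = t i • vecMulVec (u i) (star (u i)) := fun i => by
    calc σ i = ∑ j, vecMulVec (σ i *ᵥ u j) (star (u j)) := by
          simp_rw [← mul_vecMulVec, ← Finset.mul_sum, sum_vecMulVec_self_star_eq_one hu, mul_one]
      _ = vecMulVec (σ i *ᵥ u i) (star (u i)) :=
          Finset.sum_eq_single i (fun j _ hji => by simp [hoff hji.symm]) (by simp)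
      _ = t i • vecMulVec (u i) (star (u i)) := by rw [heig, smul_vecMulVec]
  have ht1 : ∀ i, t i = 1 := fun i => by
    have := htr i
    rw [hσu i, trace_smul, trace_vecMulVec, dotProduct_comm, hunit] at this
    simpa using this
  exact ⟨u, hu, fun i => by rw [hσu i, ht1 i, one_smul]⟩

end Matrix

lemma IsCP.posSemidef_apply {m n : Type*} [Fintype m] [Fintype n]
    {Φ : Matrix m m ℂ →ₗ[ℂ] Matrix n n ℂ} (hΦ : IsCP Φ) {A : Matrix m m ℂ}
    (hA : A.PosSemidef) : (Φ A).PosSemidef :=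
  (hΦ 1 _ (hA.submatrix Prod.snd)).submatrix fun b => ((0 : Fin 1), b)

section TraceDual

variable {m n : Type*} [Fintype m] [DecidableEq m] [Fintype n] [DecidableEq n]

-- The map `Ψ*` above: `trace_traceDual_mul` is its defining property.
def traceDual (Ψ : Matrix m m ℂ →ₗ[ℂ] Matrix n n ℂ) : Matrix n n ℂ →ₗ[ℂ] Matrix m m ℂ where
  toFun R := Matrix.of fun a b => (R * Ψ (Matrix.single b a 1)).trace
  map_add' _ _ := by ext; simp [add_mul]
  map_smul' _ _ := by ext; simp

lemma trace_traceDual_mul (Ψ : Matrix m m ℂ →ₗ[ℂ] Matrix n n ℂ) (R : Matrix n n ℂ)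
    (X : Matrix m m ℂ) : (traceDual Ψ R * X).trace = (R * Ψ X).trace := by
  induction X using Matrix.induction_on' with
  | h_zero => simp
  | h_add X Y hX hY => simp [mul_add, hX, hY]
  | h_std_basis a b c =>
    rw [show Matrix.single a b c = c • Matrix.single a b 1 by
        rw [smul_single, smul_eq_mul, mul_one],
      Matrix.mul_smul, trace_smul, map_smul, Matrix.mul_smul, trace_smul]
    simp [traceDual, trace_mul_single]

lemma traceDual_one {Ψ : Matrix m m ℂ →ₗ[ℂ] Matrix n n ℂ} (hΨ : ∀ X, (Ψ X).trace = X.trace) :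
    traceDual Ψ 1 = 1 := by
  ext a b
  rcases eq_or_ne a b with rfl | hab
  · simp [traceDual, hΨ]
  · simp [traceDual, hΨ, hab, hab.symm]

lemma posSemidef_traceDual {Ψ : Matrix m m ℂ →ₗ[ℂ] Matrix n n ℂ}
    (hΨ : ∀ X, X.PosSemidef → (Ψ X).PosSemidef) {R : Matrix n n ℂ} (hR : R.PosSemidef) :
    (traceDual Ψ R).PosSemidef := by
  refine Matrix.posSemidef_of_forall_dotProduct_mulVec_nonneg fun x => ?_
  rw [dotProduct_comm, ← trace_vecMulVec, ← mul_vecMulVec, trace_traceDual_mul]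
  exact hR.trace_mul_nonneg (hΨ _ (posSemidef_vecMulVec_self_star x))

end TraceDual

/-- A channel between spaces of equal dimension `d` that is reversible
with respect to a complete family of `d` orthogonal pure states maps them to
orthogonal pure states and is unital. -/
theorem outputs_pure_orthogonal_and_unital_of_reversible
    {d : ℕ}
    (Φ : Mat d →ₗ[ℂ] Mat d) (hΦ : IsChannel Φ)
    (v : Fin d → (Fin d → ℂ))
    (honb : ∀ i j, star (v i) ⬝ᵥ v j = if i = j then 1 else 0)
    (ρ : Fin d → Mat d)
    (hρ : ∀ i, ρ i = Matrix.vecMulVec (v i) (star (v i)))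
    (Ψ : Mat d →ₗ[ℂ] Mat d) (hΨ : IsChannel Ψ)
    (hrev : ∀ i, Ψ (Φ (ρ i)) = ρ i) :
    (∀ i, IsPureState (Φ (ρ i))) ∧
    (∀ i j, i ≠ j → (Φ (ρ i) * Φ (ρ j)).trace = 0) ∧
    Φ 1 = 1 := by
  obtain ⟨hΦcp, hΦtr⟩ := hΦ
  obtain ⟨hΨcp, hΨtr⟩ := hΨ
  have hρ_psd : ∀ i, (ρ i).PosSemidef := fun i => hρ i ▸ posSemidef_vecMulVec_self_star (v i)
  have hρ_sum : ∑ i, ρ i = 1 := by simp_rw [hρ]; exact sum_vecMulVec_self_star_eq_one honb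
  have hρ_orth : Pairwise fun i j => (ρ i * ρ j).trace = 0 := fun i j hij => by
    simp [hρ, vecMulVec_mul_vecMulVec, honb, hij]
  have hσ_psd : ∀ i, (Φ (ρ i)).PosSemidef := fun i => hΦcp.posSemidef_apply (hρ_psd i)
  have hσ_tr : ∀ i, (Φ (ρ i)).trace = 1 := fun i => by
    rw [hΦtr, hρ, trace_vecMulVec, dotProduct_comm, honb, if_pos rfl]
  have hσ_orth : Pairwise fun i j => Φ (ρ i) * Φ (ρ j) = 0 :=
    pairwise_mul_eq_zero_of_trace_mul_eq_zero_of_sum_eq_one (M := fun i => traceDual Ψ (ρ i))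
      (fun i => posSemidef_traceDual (fun _ => hΨcp.posSemidef_apply) (hρ_psd i)) hσ_psd
      (by rw [← map_sum, hρ_sum, traceDual_one hΨtr])
      fun i j hij => (trace_traceDual_mul Ψ _ _).trans (by rw [hrev]; exact hρ_orth hij)
  obtain ⟨u, hu, hσ⟩ :=
    exists_orthonormal_eq_vecMulVec_of_pairwise_mul_eq_zero hσ_psd hσ_tr hσ_orth
  refine ⟨fun i => ⟨hσ_psd i, hσ_tr i, ?_⟩, fun i j hij => by rw [hσ_orth hij, trace_zero], ?_⟩
  · rw [hσ i, vecMulVec_mul_vecMulVec, hu, if_pos rfl, one_smul]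
  · calc Φ 1 = ∑ i, Φ (ρ i) := by rw [← hρ_sum, map_sum]
      _ = 1 := by simp_rw [hσ]; exact sum_vecMulVec_self_star_eq_one hu

end
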